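/- Let k, ℓ ∈ ℕ with ℓ ≥ 1 and q ≥ 3 colors. Consider the graph with vertices B = {b_1,…,b_k} and a path w_1,…,w_{ℓ−1}, edges b_i w_1 for all i and w_j w_{j+1} for 1 ≤ j ≤ ℓ−2, and lists L(b_i) = {1,2}, L(w_j) = {2,3} if j ≡ 1 (mod 3), {1,3} if j ≡ 2 (mod 3), {1,2} if j ≡ 0 (mod 3). Then: (i) the number of list colorings c with c(b_i) = 1 for all i equals ℓ; (ii) every partial coloring c_B : B → {1,2} that assigns color 2 to at least one b_i extends in exactly one way to a list coloring of the whole graph. -/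
import Mathlib


/-- Vertices of the counting gadget: b_1,…,b_k and the path w_1,…,w_{ℓ−1}
(w_j for j : Fin (ℓ−1) is the paper's w_{j+1}). -/
abbrev AtomVtx (k ℓ : ℕ) := Fin k ⊕ Fin (ℓ - 1)

/-- Base edges: b_i w_1 for every i, and w_j w_{j+1} along the path. -/
def atomEdge (k ℓ : ℕ) : AtomVtx k ℓ → AtomVtx k ℓ → Prop
  | Sum.inl _, Sum.inr j => j.val = 0
  | Sum.inr j, Sum.inr j' => j'.val = j.val + 1
  | _, _ => False

/-- Adjacency: symmetrization of the base edges. -/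
def atomAdj (k ℓ : ℕ) (u v : AtomVtx k ℓ) : Prop := atomEdge k ℓ u v ∨ atomEdge k ℓ v u

/-- Lists: L(b_i) = {1,2}; L(w_j) = {2,3} if j ≡ 1 (mod 3), {1,3} if j ≡ 2 (mod 3),
{1,2} if j ≡ 0 (mod 3). -/
def atomList (k ℓ : ℕ) : AtomVtx k ℓ → Finset ℕ
  | Sum.inl _ => {1, 2}
  | Sum.inr j =>
      if (j.val + 1) % 3 = 1 then {2, 3}
      else if (j.val + 1) % 3 = 2 then {1, 3}
      else {1, 2}

/-- A list coloring of the counting gadget. -/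
def atomColoring (k ℓ : ℕ) (c : AtomVtx k ℓ → ℕ) : Prop :=
  (∀ v, c v ∈ atomList k ℓ v) ∧ ∀ u v, atomAdj k ℓ u v → c u ≠ c v

/-! Auxiliary definitions -/

def colA (j : ℕ) : ℕ := if j % 3 = 0 then 2 else if j % 3 = 1 then 3 else 1
def colB (j : ℕ) : ℕ := if j % 3 = 0 then 3 else if j % 3 = 1 then 1 else 2

lemma mod3cases (j : ℕ) : j % 3 = 0 ∨ j % 3 = 1 ∨ j % 3 = 2 := by omega

lemma mem_atomList_inr (k ℓ : ℕ) (j : Fin (ℓ - 1)) (c : ℕ) :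
    c ∈ atomList k ℓ (Sum.inr j) ↔ c = colA j.val ∨ c = colB j.val := by
  rcases mod3cases j.val with h | h | h <;>
    · have h1 : (j.val + 1) % 3 = (j.val % 3 + 1) % 3 := by omega
      simp [atomList, colA, colB, h1, h, Finset.mem_insert]
      try tauto

lemma colA_succ (j : ℕ) : colA (j + 1) = colB j := by
  have h1 : (j + 1) % 3 = (j % 3 + 1) % 3 := by omega
  rcases mod3cases j with h | h | h <;> simp [colA, colB, h1, h]

lemma colA_ne_colB (j : ℕ) : colA j ≠ colB j := by
  rcases mod3cases j with h | h | h <;> simp [colA, colB, h]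

lemma colB_succ_ne (j : ℕ) : colB (j + 1) ≠ colB j := by
  have h1 : (j + 1) % 3 = (j % 3 + 1) % 3 := by omega
  rcases mod3cases j with h | h | h <;> simp [colB, h1, h]

lemma colA_ne_colB_succ (j : ℕ) : colA j ≠ colB (j + 1) := by
  have h1 : (j + 1) % 3 = (j % 3 + 1) % 3 := by omega
  rcases mod3cases j with h | h | h <;> simp [colA, colB, h1, h]

/-- The candidate colorings: boundary colored by `cB`, path colored `colA` before
position `m` and `colB` from `m` on. -/
def gC (k ℓ m : ℕ) (cB : Fin k → ℕ) : AtomVtx k ℓ → ℕ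
  | Sum.inl i => cB i
  | Sum.inr j => if j.val < m then colA j.val else colB j.val

lemma gC_coloring (k ℓ m : ℕ) (cB : Fin k → ℕ)
    (h1 : ∀ i, cB i ∈ ({1, 2} : Finset ℕ))
    (h0 : ∀ i, cB i ≠ (if 0 < m then colA 0 else colB 0)) :
    atomColoring k ℓ (gC k ℓ m cB) := by
  constructor
  · intro v
    match v with
    | Sum.inl i => exact h1 i
    | Sum.inr j =>
      rw [mem_atomList_inr]
      by_cases h : j.val < m <;> simp [gC, h]
  · intro u v hadj
    match u, v with
    | Sum.inl i, Sum.inl i' =>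
      rcases hadj with h | h <;> exact h.elim
    | Sum.inl i, Sum.inr j =>
      have hj : j.val = 0 := by
        rcases hadj with h | h
        · exact h
        · exact h.elim
      show cB i ≠ _
      simp only [gC, hj]
      exact h0 i
    | Sum.inr j, Sum.inl i =>
      have hj : j.val = 0 := by
        rcases hadj with h | h
        · exact h.elim
        · exact h
      have := h0 i
      simp only [gC, hj]
      intro hcontra
      exact this hcontra.symm
    | Sum.inr j, Sum.inr j' =>
      have hj : j'.val = j.val + 1 ∨ j.val = j'.val + 1 := by
        rcases hadj with h | h
        · exact Or.inl h
        · exact Or.inr h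
      have key : ∀ (a b : Fin (ℓ - 1)), b.val = a.val + 1 →
          gC k ℓ m cB (Sum.inr a) ≠ gC k ℓ m cB (Sum.inr b) := by
        intro a b hab
        simp only [gC, hab]
        by_cases hb : a.val + 1 < m
        · have ha : a.val < m := by omega
          rw [if_pos ha, if_pos hb, colA_succ]
          exact colA_ne_colB a.val
        · rw [if_neg hb]
          by_cases ha : a.val < m
          · rw [if_pos ha]; exact colA_ne_colB_succ a.val
          · rw [if_neg ha]; exact fun h => colB_succ_ne a.val h.symm
      rcases hj with h | h
      · exact key j j' h
      · exact fun hc => key j' j h hc.symm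

lemma force (k ℓ : ℕ) (c : AtomVtx k ℓ → ℕ) (hc : atomColoring k ℓ c)
    (j j' : Fin (ℓ - 1)) (hj' : j'.val = j.val + 1)
    (h : c (Sum.inr j) = colB j.val) : c (Sum.inr j') = colB j'.val := by
  have hadj := hc.2 (Sum.inr j) (Sum.inr j') (Or.inl hj')
  have hmem := (mem_atomList_inr k ℓ j' _).mp (hc.1 (Sum.inr j'))
  rcases hmem with hA | hB
  · exfalso
    apply hadj
    rw [h, hA, hj', colA_succ]
  · exact hB

lemma force_from (k ℓ : ℕ) (c : AtomVtx k ℓ → ℕ) (hc : atomColoring k ℓ c)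
    (m : ℕ) (hmlt : m < ℓ - 1) (hbase : c (Sum.inr ⟨m, hmlt⟩) = colB m) :
    ∀ n (hn : n < ℓ - 1), m ≤ n → c (Sum.inr ⟨n, hn⟩) = colB n := by
  intro n
  induction n with
  | zero =>
    intro hn h0
    have : m = 0 := by omega
    subst this
    exact hbase
  | succ n ih =>
    intro hn hmn
    by_cases h : m = n + 1
    · subst h; exact hbase
    · have hn' : n < ℓ - 1 := by omega
      exact force k ℓ c hc ⟨n, hn'⟩ ⟨n + 1, hn⟩ rfl (ih hn' (by omega))

/-- The counting gadget: (i) exactly ℓ list colorings assign color 1 to every b_i;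
(ii) every boundary coloring with values in {1,2} that uses color 2 somewhere has a
unique extension to a list coloring of the whole gadget. -/
theorem stmt15 (k ℓ q : ℕ) (hℓ : 1 ≤ ℓ) (hq : 3 ≤ q) :
    Nat.card {c : AtomVtx k ℓ → ℕ //
        atomColoring k ℓ c ∧ ∀ i : Fin k, c (Sum.inl i) = 1} = ℓ ∧
    ∀ cB : Fin k → ℕ, (∀ i, cB i ∈ ({1, 2} : Finset ℕ)) → (∃ i, cB i = 2) →
      ∃! c : AtomVtx k ℓ → ℕ,
        atomColoring k ℓ c ∧ ∀ i : Fin k, c (Sum.inl i) = cB i := by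
  classical
  constructor
  · -- part (i)
    set S := {c : AtomVtx k ℓ → ℕ //
        atomColoring k ℓ c ∧ ∀ i : Fin k, c (Sum.inl i) = 1} with hS
    have hone : ∀ i : Fin k, (1 : ℕ) ∈ ({1, 2} : Finset ℕ) := by
      intro _; simp
    have hvalid : ∀ m : ℕ, atomColoring k ℓ (gC k ℓ m (fun _ => 1)) := by
      intro m
      apply gC_coloring k ℓ m _ hone
      intro i
      by_cases h : 0 < m <;> simp [h, colA, colB]
    let f : Fin ℓ → S := fun m =>
      ⟨gC k ℓ m.val (fun _ => 1), hvalid m.val, fun i => rfl⟩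
    have hbij : Function.Bijective f := by
      constructor
      · intro m m' hmm'
        by_contra hne
        have hcases : m.val < m'.val ∨ m'.val < m.val := by
          rcases lt_trichotomy m.val m'.val with h | h | h
          · exact Or.inl h
          · exact absurd (Fin.ext h) hne
          · exact Or.inr h
        have key : ∀ a b : Fin ℓ, a.val < b.val → f a = f b → False := by
          intro a b hab hfab
          have hlt : a.val < ℓ - 1 := by omega
          have := congrFun (Subtype.ext_iff.mp hfab) (Sum.inr ⟨a.val, hlt⟩)
          simp only [f, gC, lt_irrefl, if_neg (lt_irrefl a.val), if_pos hab] at this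
          exact colA_ne_colB a.val this.symm
        rcases hcases with h | h
        · exact key m m' h hmm'
        · exact key m' m h hmm'.symm
      · rintro ⟨c, hc, hb⟩
        set P : ℕ → Prop := fun n => ∃ hn : n < ℓ - 1, c (Sum.inr ⟨n, hn⟩) = colB n with hP
        by_cases hex : ∃ n, P n
        · set m := Nat.find hex with hm
          obtain ⟨hmlt, hcm⟩ := Nat.find_spec hex
          refine ⟨⟨m, by omega⟩, ?_⟩
          apply Subtype.ext
          funext v
          match v with
          | Sum.inl i => exact (hb i).symm
          | Sum.inr j =>
            show gC k ℓ m (fun _ => 1) (Sum.inr j) = c (Sum.inr j)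
            by_cases hjm : j.val < m
            · have hnotB : ¬ P j.val := Nat.find_min hex hjm
              have hmem := (mem_atomList_inr k ℓ j _).mp (hc.1 (Sum.inr j))
              rcases hmem with hA | hB
              · simp only [gC, if_pos hjm]
                exact hA.symm
              · exfalso
                exact hnotB ⟨j.isLt, by rw [Fin.eta]; exact hB⟩
            · have := force_from k ℓ c hc m hmlt hcm j.val j.isLt (by omega)
              rw [Fin.eta] at this
              simp only [gC, if_neg hjm]
              exact this.symm
        · refine ⟨⟨ℓ - 1, by omega⟩, ?_⟩
          apply Subtype.ext
          funext v
          match v with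
          | Sum.inl i => exact (hb i).symm
          | Sum.inr j =>
            show gC k ℓ (ℓ - 1) (fun _ => 1) (Sum.inr j) = c (Sum.inr j)
            have hmem := (mem_atomList_inr k ℓ j _).mp (hc.1 (Sum.inr j))
            rcases hmem with hA | hB
            · simp only [gC, if_pos j.isLt]
              exact hA.symm
            · exfalso
              exact hex ⟨j.val, j.isLt, by rw [Fin.eta]; exact hB⟩
    calc Nat.card S = Nat.card (Fin ℓ) := (Nat.card_eq_of_bijective f hbij).symm
      _ = ℓ := by simp
  · -- part (ii)
    intro cB hmem ⟨i2, hi2⟩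
    have h12 : ∀ i, cB i = 1 ∨ cB i = 2 := by
      intro i
      have := hmem i
      simp [Finset.mem_insert] at this
      tauto
    refine ⟨gC k ℓ 0 cB, ⟨?_, fun i => rfl⟩, ?_⟩
    · apply gC_coloring k ℓ 0 cB hmem
      intro i
      simp only [lt_irrefl, if_neg (lt_irrefl 0)]
      rcases h12 i with h | h <;> simp [h, colB]
    · rintro c ⟨hc, hb⟩
      funext v
      match v with
      | Sum.inl i => exact hb i
      | Sum.inr j =>
        have h0lt : 0 < ℓ - 1 := j.pos
        have hc0 : c (Sum.inr ⟨0, h0lt⟩) = colB 0 := by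
          have hmem0 := (mem_atomList_inr k ℓ ⟨0, h0lt⟩ _).mp (hc.1 (Sum.inr ⟨0, h0lt⟩))
          rcases hmem0 with hA | hB
          · exfalso
            have hadj := hc.2 (Sum.inl i2) (Sum.inr ⟨0, h0lt⟩) (Or.inl rfl)
            apply hadj
            rw [hb i2, hi2, hA]
            simp [colA]
          · exact hB
        have := force_from k ℓ c hc 0 h0lt hc0 j.val j.isLt (Nat.zero_le _)
        rw [Fin.eta] at this
        show c (Sum.inr j) = gC k ℓ 0 cB (Sum.inr j)
        simp only [gC, Nat.not_lt_zero, if_neg (Nat.not_lt_zero j.val)]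
        exact this
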